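/- arXiv:2603.17984 — 2 statements merged into one kernel-verified Lean document; each statement's English description precedes it below -/
import Mathlib

section
/- In the independent two-group model over Θ_U, let ε, π̲0 ∈ (0,1), κ ∈ [0,1−ε], set π̄0 = min_{x ∈ [κ,1]} f(x) and π0* = min_{x ∈ [0,1]} f(x), and assume π0* > π̲0. Let Δ ∈ [0,1] satisfy D(m,ε,π̲0) − 1 ≤ Δ, 3·π0*·Δ + 2·L(f)·ε < π̄0 − π̲0, and π̄0·ε > (1+Δ)/m. Then P( π̂^IMS_{0,ε,π̲0,κ} ≥ π̄0 + 4·π̄0·Δ + 2·L(f)·ε ) ≤ 2·e^{−m·ε²·Δ²·π̄0²/2}. -/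
open MeasureTheory ProbabilityTheory
open scoped ENNReal

noncomputable section

/-- The least favorable null distribution `Q_{0,s}` on `Fin s → ℝ` in the independent
setting: first coordinate `0`, remaining coordinates i.i.d. uniform on `(0,1)`. -/
def Q0 (s : ℕ) : Measure (Fin s → ℝ) :=
  Measure.pi fun i =>
    if (i : ℕ) = 0 then Measure.dirac 0 else volume.restrict (Set.Ioo 0 1)

open Classical in
/-- Inner random quantity in the normalizing factor `c(s,ε)`:
`1 ∨ max_{λ ∈ {q_i} ∩ (0,1-ε)} s(1-λ)/(1 ∨ #{i : q_i > λ})` (empty max taken as `1`). -/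
def cInner (s : ℕ) (ε : ℝ) (q : Fin s → ℝ) : ℝ :=
  max 1
    ((((Finset.univ.filter fun i : Fin s => 0 < q i ∧ q i < 1 - ε).image fun i =>
        (s : ℝ) * (1 - q i) /
          max 1 ((Finset.univ.filter fun j => q i < q j).card : ℝ)).max).unbotD 1)

/-- The quantity `c(s,ε)`. -/
def cVal (s : ℕ) (ε : ℝ) : ℝ := ∫ q, cInner s ε q ∂(Q0 s)

open Classical in
/-- The normalizing factor `C(m,ε,π̲₀) = max{c(s,ε) : π̲₀ m ≤ s ≤ m}`. -/
def Cfac (m : ℕ) (ε pl : ℝ) : ℝ :=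
  ((((Finset.range (m + 1)).filter fun s : ℕ => pl * (m : ℝ) ≤ (s : ℝ)).image fun s =>
    cVal s ε).max).unbotD 1

open Classical in
/-- Inner random quantity in the normalizing factor `d(s,ε)`: the maximum, over open
intervals `I = (a,b)` with `0 ≤ a ≤ b - ε` and endpoints in `{q_i} ∪ {0,1}`, of
`s(b-a)/(1 ∨ #{i : q_i ∈ I})`. -/
def dInner (s : ℕ) (ε : ℝ) (q : Fin s → ℝ) : ℝ :=
  (((((Finset.univ.image q) ∪ {0, 1}) ×ˢ ((Finset.univ.image q) ∪ {0, 1})).filter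
      (fun ab : ℝ × ℝ => 0 ≤ ab.1 ∧ ab.1 ≤ ab.2 - ε)).image fun ab =>
        (s : ℝ) * (ab.2 - ab.1) /
          max 1 ((Finset.univ.filter fun i => ab.1 < q i ∧ q i < ab.2).card : ℝ)).max.unbotD 0

/-- The quantity `d(s,ε)`. -/
def dVal (s : ℕ) (ε : ℝ) : ℝ := ∫ q, dInner s ε q ∂(Q0 s)

open Classical in
/-- The normalizing factor `D(m,ε,π̲₀) = max{d(s,ε) : π̲₀ m ≤ s ≤ m}`. -/
def Dfac (m : ℕ) (ε pl : ℝ) : ℝ :=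
  ((((Finset.range (m + 1)).filter fun s : ℕ => pl * (m : ℝ) ≤ (s : ℝ)).image fun s =>
    dVal s ε).max).unbotD 1

open Classical in
/-- `inf_{λ ∈ [0,1-ε]} (1 ∨ #{i : p_i ≥ λ})/(m(1-λ))`. -/
def msInf (m : ℕ) (ε : ℝ) (p : Fin m → ℝ) : ℝ :=
  sInf ((fun lam =>
    (max 1 ((Finset.univ.filter fun i => lam ≤ p i).card : ℝ)) / (m * (1 - lam))) ''
      Set.Icc 0 (1 - ε))

/-- The min-Storey estimator `π̂^MS_{0,ε,π̲₀}`. -/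
def msEst (m : ℕ) (ε pl : ℝ) (p : Fin m → ℝ) : ℝ :=
  max pl (Cfac m ε pl * msInf m ε p)

open Classical in
/-- `inf` over open intervals `I = (a,b) ⊆ [κ,1]` with `|I| ≥ ε` of
`(1 ∨ #{i : p_i ∈ I})/(m |I|)`. -/
def imsInf (m : ℕ) (ε κ : ℝ) (p : Fin m → ℝ) : ℝ :=
  sInf {x : ℝ | ∃ a b : ℝ, κ ≤ a ∧ b ≤ 1 ∧ ε ≤ b - a ∧
    x = (max 1 ((Finset.univ.filter fun i => a < p i ∧ p i < b).card : ℝ)) / (m * (b - a))}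

/-- The interval-min-Storey estimator `π̂^IMS_{0,ε,π̲₀,κ}`. -/
def imsEst (m : ℕ) (ε pl κ : ℝ) (p : Fin m → ℝ) : ℝ :=
  max pl (Dfac m ε pl * imsInf m ε κ p)

open Classical in
/-- Empirical CDF `F̂_m(t) = m⁻¹ #{i : p_i ≤ t}`. -/
def Fhat (m : ℕ) (p : Fin m → ℝ) (t : ℝ) : ℝ :=
  ((Finset.univ.filter fun i => p i ≤ t).card : ℝ) / m

/-- The data-driven capping `κ̂ = sup{κ ∈ [0,1-ε] : F̂_m(κ) ≥ κ π̂^IMS_{0,ε,π̲₀,κ}/α}`. -/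
def kappaHat (m : ℕ) (ε pl α : ℝ) (p : Fin m → ℝ) : ℝ :=
  sSup {κ : ℝ | κ ∈ Set.Icc 0 (1 - ε) ∧ κ * imsEst m ε pl κ p / α ≤ Fhat m p κ}

/-- `G` is the CDF of a probability distribution on `[0,1]`: nondecreasing and
right-continuous on `[0,1]`, nonnegative there, with `G 1 = 1`. -/
def IsCDF01 (G : ℝ → ℝ) : Prop :=
  MonotoneOn G (Set.Icc 0 1) ∧
    (∀ x ∈ Set.Ico (0 : ℝ) 1, ContinuousWithinAt G (Set.Ici x) x) ∧
    G 1 = 1 ∧ ∀ x ∈ Set.Icc (0 : ℝ) 1, 0 ≤ G x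

/-- i.i.d. two-group model: the `p`-values `p_1,…,p_m` take values in `[0,1]` and are
i.i.d. with CDF `F`. -/
def IIDModel {Ω : Type*} [MeasurableSpace Ω] (μ : Measure Ω) (m : ℕ)
    (p : Ω → Fin m → ℝ) (F : ℝ → ℝ) : Prop :=
  Measurable p ∧ (∀ ω i, p ω i ∈ Set.Icc (0 : ℝ) 1) ∧
    iIndepFun (fun i ω => p ω i) μ ∧
    ∀ i, ∀ t ∈ Set.Icc (0 : ℝ) 1, μ {ω | p ω i ≤ t} = ENNReal.ofReal (F t)

set_option maxHeartbeats 1000000 in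
/-- Proposition 12(i): concentration of the interval-min-Storey
estimator below `π̄₀ = min_{x ∈ [κ,1]} f(x)` in the independent two-group model over
`Θ_U` (uniform nulls). -/
theorem statement16 {Ω : Type*} [MeasurableSpace Ω] (μ : Measure Ω) [IsProbabilityMeasure μ]
    (m : ℕ) (hm : 1 ≤ m)
    -- the parameter θ = (π0, I, F1) ∈ Θ_U, with mixture CDF F and mixture density f
    (π0 : ℝ) (hπ0 : π0 ∈ Set.Ioo (0 : ℝ) 1) (F1 f1 F f : ℝ → ℝ)
    (hF1 : IsCDF01 F1)
    (L1 : ℝ) (hL1 : 0 ≤ L1) (hf1Lip : LipschitzOnWith (Real.toNNReal L1) f1 (Set.Icc 0 1))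
    (hf1_nonneg : ∀ x ∈ Set.Icc (0 : ℝ) 1, 0 ≤ f1 x)
    (hf1_dens : ∀ x ∈ Set.Icc (0 : ℝ) 1, F1 x = ∫ t in (0 : ℝ)..x, f1 t)
    (hF : ∀ x ∈ Set.Icc (0 : ℝ) 1, F x = π0 * x + (1 - π0) * F1 x)
    (hf : ∀ x ∈ Set.Icc (0 : ℝ) 1, f x = π0 + (1 - π0) * f1 x)
    (L : ℝ) (hL : 0 ≤ L) (hfLip : LipschitzOnWith (Real.toNNReal L) f (Set.Icc 0 1))
    -- the p-values, i.i.d. with CDF F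
    (p : Ω → Fin m → ℝ) (hmodel : IIDModel μ m p F)
    -- parameters of the IMS estimator
    (ε pl : ℝ) (hε : ε ∈ Set.Ioo (0 : ℝ) 1) (hpl : pl ∈ Set.Ioo (0 : ℝ) 1)
    (κ : ℝ) (hκ : κ ∈ Set.Icc (0 : ℝ) (1 - ε))
    (pibar pistar : ℝ) (hpibar : pibar = sInf (f '' Set.Icc κ 1))
    (hpistar : pistar = sInf (f '' Set.Icc 0 1))
    (hpl_lt : pl < pistar)
    (Δ : ℝ) (hΔ : Δ ∈ Set.Icc (0 : ℝ) 1) (hDΔ : Dfac m ε pl - 1 ≤ Δ)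
    (hgap : 3 * pistar * Δ + 2 * L * ε < pibar - pl)
    (hmε : (1 + Δ) / m < pibar * ε) :
    μ {ω | pibar + 4 * pibar * Δ + 2 * L * ε ≤ imsEst m ε pl κ (p ω)} ≤
      ENNReal.ofReal (2 * Real.exp (-m * ε ^ 2 * Δ ^ 2 * pibar ^ 2 / 2)) := by
  classical
  obtain ⟨hp_meas, hp_mem, hp_indep, hp_cdf⟩ := hmodel
  have hε0 : 0 < ε := hε.1
  have hε1 : ε < 1 := hε.2
  have hκ0 : 0 ≤ κ := hκ.1
  have hκ1 : κ ≤ 1 - ε := hκ.2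
  have hm1 : (1 : ℝ) ≤ m := by exact_mod_cast hm
  have hm0 : (0 : ℝ) < m := lt_of_lt_of_le one_pos hm1
  -- f is bounded below by π0 on [0,1]
  have hfpos : ∀ x ∈ Set.Icc (0 : ℝ) 1, π0 ≤ f x := by
    intro x hx
    rw [hf x hx]
    nlinarith only [hf1_nonneg x hx, hπ0.1, hπ0.2]
  have hfcont : ContinuousOn f (Set.Icc 0 1) := hfLip.continuousOn
  have hκle1 : κ ≤ 1 := by linarith only [hκ1, hε0]
  have hIccsub : Set.Icc κ 1 ⊆ Set.Icc (0 : ℝ) 1 := Set.Icc_subset_Icc hκ0 le_rfl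
  obtain ⟨x₀, hx₀mem, hx₀min⟩ :=
    isCompact_Icc.exists_isMinOn (Set.nonempty_Icc.2 hκle1) (hfcont.mono hIccsub)
  have hx₀01 : x₀ ∈ Set.Icc (0 : ℝ) 1 := hIccsub hx₀mem
  have hpibar_eq : pibar = f x₀ := by
    rw [hpibar]
    apply le_antisymm
    · exact csInf_le ⟨π0, fun y ⟨x, hx, hxy⟩ => hxy ▸ hfpos x (hIccsub hx)⟩ ⟨x₀, hx₀mem, rfl⟩
    · exact le_csInf ⟨f x₀, x₀, hx₀mem, rfl⟩ (fun y ⟨x, hx, hxy⟩ => hxy ▸ hx₀min hx)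
  have hpistar_le : pistar ≤ pibar := by
    rw [hpistar, hpibar]
    exact csInf_le_csInf ⟨π0, fun y ⟨x, hx, hxy⟩ => hxy ▸ hfpos x hx⟩
      ⟨f x₀, x₀, hx₀mem, rfl⟩ (Set.image_mono hIccsub)
  have hpl0 : 0 < pl := hpl.1
  have hpibar_pos : 0 < pibar := lt_trans hpl0 (lt_of_lt_of_le hpl_lt hpistar_le)
  have hplpibar : pl < pibar := lt_of_lt_of_le hpl_lt hpistar_le
  -- trivial case Δ = 0
  rcases eq_or_lt_of_le hΔ.1 with hΔ0 | hΔpos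
  · have hz : -(m : ℝ) * ε ^ 2 * Δ ^ 2 * pibar ^ 2 / 2 = 0 := by rw [← hΔ0]; ring
    rw [hz, Real.exp_zero, mul_one]
    calc μ _ ≤ 1 := prob_le_one
    _ ≤ ENNReal.ofReal 2 := by
        rw [show (2:ℝ) = 1 + 1 by norm_num, ENNReal.ofReal_add zero_le_one zero_le_one]
        simp
  -- main case : 0 < Δ
  have hΔ1 : Δ ≤ 1 := hΔ.2
  -- the interval (a, b)
  set a : ℝ := min x₀ (1 - ε) with ha_def
  set b : ℝ := a + ε with hb_def
  have hκa : κ ≤ a := le_min hx₀mem.1 hκ1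
  have hab : a ≤ b := by rw [hb_def]; linarith only [hε0]
  have hb1 : b ≤ 1 := by
    have h1 := min_le_right x₀ (1 - ε)
    rw [hb_def]; rw [← ha_def] at h1; linarith only [h1]
  have ha0 : 0 ≤ a := le_trans hκ0 hκa
  have hax : a ≤ x₀ := min_le_left _ _
  have hxb : x₀ ≤ b := by
    rcases le_or_gt x₀ (1 - ε) with h | h
    · have he : a = x₀ := min_eq_left h
      rw [hb_def, he]; linarith only [hε0]
    · have he : a = 1 - ε := min_eq_right h.le
      rw [hb_def, he]; linarith only [hx₀mem.2]
  have hamem : a ∈ Set.Icc (0 : ℝ) 1 := ⟨ha0, by linarith only [hab, hb1]⟩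
  have hbmem : b ∈ Set.Icc (0 : ℝ) 1 := ⟨by linarith only [ha0, hab], hb1⟩
  have hsub_ab : Set.Icc a b ⊆ Set.Icc (0 : ℝ) 1 := Set.Icc_subset_Icc ha0 hb1
  have hba_eq : b - a = ε := by rw [hb_def]; ring
  clear_value a b
  -- f is bounded above by pibar + L ε on [a,b]
  have hfub : ∀ x ∈ Set.Icc a b, f x ≤ pibar + L * ε := by
    intro x hx
    have hx01 : x ∈ Set.Icc (0 : ℝ) 1 := hsub_ab hx
    have hd := hfLip.dist_le_mul x hx01 x₀ hx₀01
    rw [Real.dist_eq, Real.dist_eq, Real.coe_toNNReal L hL] at hd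
    have h1 : |x - x₀| ≤ ε := by
      rw [abs_le]
      constructor
      · linarith only [hx.1, hxb, hba_eq]
      · linarith only [hx.2, hax, hba_eq]
    have h2 : f x - f x₀ ≤ L * |x - x₀| := le_trans (le_abs_self _) hd
    have h3 : L * |x - x₀| ≤ L * ε := mul_le_mul_of_nonneg_left h1 hL
    rw [hpibar_eq]; linarith only [h2, h3]
  have hflb : ∀ x ∈ Set.Icc a b, 0 ≤ f x := fun x hx =>
    le_trans hπ0.1.le (hfpos x (hsub_ab hx))
  -- q = F b - F a = ∫ f on [a,b]
  set q : ℝ := F b - F a with hq_def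
  clear_value q
  have hf1cont : ContinuousOn f1 (Set.Icc 0 1) := hf1Lip.continuousOn
  have hint_f1_ab : IntervalIntegrable f1 volume a b := by
    rw [intervalIntegrable_iff_integrableOn_Icc_of_le hab]
    exact (hf1cont.mono hsub_ab).integrableOn_compact isCompact_Icc
  have hint_f1_0a : IntervalIntegrable f1 volume 0 a := by
    rw [intervalIntegrable_iff_integrableOn_Icc_of_le ha0]
    exact (hf1cont.mono (Set.Icc_subset_Icc le_rfl hamem.2)).integrableOn_compact isCompact_Icc
  have hint_f_ab : IntervalIntegrable f volume a b := by
    rw [intervalIntegrable_iff_integrableOn_Icc_of_le hab]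
    exact ((hfcont.mono hsub_ab)).integrableOn_compact isCompact_Icc
  have hq_int : q = ∫ x in a..b, f x := by
    have hFa := hF a hamem
    have hFb := hF b hbmem
    have hF1a := hf1_dens a hamem
    have hF1b := hf1_dens b hbmem
    have hsplit : (∫ x in (0:ℝ)..a, f1 x) + ∫ x in a..b, f1 x = ∫ x in (0:ℝ)..b, f1 x :=
      intervalIntegral.integral_add_adjacent_intervals hint_f1_0a hint_f1_ab
    have hcongr : ∫ x in a..b, f x = ∫ x in a..b, (π0 + (1 - π0) * f1 x) := by
      apply intervalIntegral.integral_congr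
      intro x hx
      rw [Set.uIcc_of_le hab] at hx
      exact hf x (hsub_ab hx)
    have hadd : ∫ x in a..b, (π0 + (1 - π0) * f1 x)
        = (∫ x in a..b, (π0 : ℝ)) + ∫ x in a..b, (1 - π0) * f1 x :=
      intervalIntegral.integral_add intervalIntegrable_const (hint_f1_ab.const_mul _)
    rw [hq_def, hFa, hFb, hF1a, hF1b, hcongr, hadd, intervalIntegral.integral_const,
      intervalIntegral.integral_const_mul, ← hsplit]
    simp only [smul_eq_mul]
    ring
  have hq0 : 0 ≤ q := by
    rw [hq_int]
    exact intervalIntegral.integral_nonneg hab hflb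
  have hqub : q ≤ ε * (pibar + L * ε) := by
    rw [hq_int]
    have h1 : ∫ x in a..b, f x ≤ ∫ x in a..b, (pibar + L * ε) :=
      intervalIntegral.integral_mono_on hab hint_f_ab intervalIntegrable_const hfub
    rw [intervalIntegral.integral_const, smul_eq_mul, hba_eq] at h1
    exact h1
  have hq1 : q ≤ 1 := by
    have hFbv := hF b hbmem
    have hFav := hF a hamem
    have hF1b_le : F1 b ≤ 1 := by
      rw [← hF1.2.2.1]
      exact hF1.1 hbmem ⟨zero_le_one, le_rfl⟩ hb1
    have hF1a0 : 0 ≤ F1 a := hF1.2.2.2 a hamem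
    have h1 : π0 * b ≤ π0 := mul_le_of_le_one_right hπ0.1.le hb1
    have h2 : (1 - π0) * F1 b ≤ 1 - π0 :=
      mul_le_of_le_one_right (by linarith only [hπ0.2]) hF1b_le
    have h3 : 0 ≤ π0 * a := mul_nonneg hπ0.1.le ha0
    have h4 : 0 ≤ (1 - π0) * F1 a := mul_nonneg (by linarith only [hπ0.2]) hF1a0
    rw [hq_def, hFbv, hFav]
    linarith only [h1, h2, h3, h4]
  have hFa0 : 0 ≤ F a := by
    rw [hF a hamem]
    have h4 : 0 ≤ (1 - π0) * F1 a := mul_nonneg (by linarith only [hπ0.2]) (hF1.2.2.2 a hamem)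
    have h3 : 0 ≤ π0 * a := mul_nonneg hπ0.1.le ha0
    linarith only [h3, h4]
  -- δ and t
  set dl : ℝ := Real.sqrt 2 * (ε * Δ * pibar) with hdl_def
  clear_value dl
  have hs2 : Real.sqrt 2 ^ 2 = 2 := Real.sq_sqrt (by norm_num)
  have hs2pos : 0 < Real.sqrt 2 := Real.sqrt_pos.2 (by norm_num)
  have hs2lt : Real.sqrt 2 < 3 / 2 := by
    nlinarith only [hs2, hs2pos]
  have hdlpos : 0 < dl := by
    rw [hdl_def]
    exact mul_pos hs2pos (mul_pos (mul_pos hε0 hΔpos) hpibar_pos)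
  set t : ℝ := dl / 2 with ht_def
  clear_value t
  have ht0 : 0 ≤ t := by rw [ht_def]; linarith only [hdlpos]
  set s0 : ℝ := (m : ℝ) * (q + dl) with hs0_def
  clear_value s0
  -- the Bernoulli indicators
  set X : Fin m → Ω → ℝ := fun i ω => if a < p ω i ∧ p ω i < b then 1 else 0 with hX_def
  clear_value X
  have hpim : ∀ i, Measurable fun ω => p ω i := fun i => (measurable_pi_apply i).comp hp_meas
  have hg_meas : Measurable (fun x : ℝ => if a < x ∧ x < b then (1 : ℝ) else 0) := by
    have hgi : (fun x : ℝ => if a < x ∧ x < b then (1 : ℝ) else 0)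
        = (Set.Ioo a b).indicator (fun _ => 1) := by
      funext x
      by_cases h : a < x ∧ x < b <;> simp [Set.indicator, Set.mem_Ioo, h]
    rw [hgi]
    exact measurable_const.indicator measurableSet_Ioo
  have hX_meas : ∀ i, Measurable (X i) := by
    intro i
    rw [hX_def]
    exact hg_meas.comp (hpim i)
  have hX_indep : iIndepFun X μ := by
    rw [hX_def]
    exact hp_indep.comp (fun _ x => if a < x ∧ x < b then (1 : ℝ) else 0) (fun i => hg_meas)
  have hX_ind : ∀ i, X i = Set.indicator ((fun ω => p ω i) ⁻¹' Set.Ioo a b)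
      (fun _ => (1 : ℝ)) := by
    intro i
    funext ω
    by_cases h : a < p ω i ∧ p ω i < b <;>
      simp [hX_def, Set.indicator, Set.mem_Ioo, Set.mem_preimage, h]
  have hX_int : ∀ i, Integrable (X i) μ := by
    intro i
    rw [hX_ind i]
    exact (integrable_const 1).indicator ((hpim i) measurableSet_Ioo)
  -- the mean of each indicator is at most q
  have hX_mean : ∀ i, ∫ ω, X i ω ∂μ ≤ q := by
    intro i
    rw [hX_ind i,
      MeasureTheory.integral_indicator_const (1 : ℝ) ((hpim i) measurableSet_Ioo),
      smul_eq_mul, mul_one]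
    have hA_le : μ ((fun ω => p ω i) ⁻¹' Set.Ioo a b) ≤ ENNReal.ofReal q := by
      have hmeasC : MeasurableSet {ω | p ω i ≤ a} := (hpim i) measurableSet_Iic
      have hdisj : Disjoint ((fun ω => p ω i) ⁻¹' Set.Ioo a b) {ω | p ω i ≤ a} := by
        rw [Set.disjoint_left]
        intro ω hω1 hω2
        exact absurd hω2 (not_le.2 hω1.1)
      have hsub2 : ((fun ω => p ω i) ⁻¹' Set.Ioo a b) ∪ {ω | p ω i ≤ a}
          ⊆ {ω | p ω i ≤ b} := by
        intro ω hω
        rcases hω with h | h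
        · exact le_of_lt h.2
        · exact le_trans h hab
      have hunion := measure_union (μ := μ) hdisj hmeasC
      have hcdfa : μ {ω | p ω i ≤ a} = ENNReal.ofReal (F a) := hp_cdf i a hamem
      have hcdfb : μ {ω | p ω i ≤ b} = ENNReal.ofReal (F b) := hp_cdf i b hbmem
      have hle : μ ((fun ω => p ω i) ⁻¹' Set.Ioo a b) + μ {ω | p ω i ≤ a}
          ≤ ENNReal.ofReal q + ENNReal.ofReal (F a) := by
        rw [← hunion]
        refine le_trans (measure_mono hsub2) ?_
        rw [hcdfb, ← ENNReal.ofReal_add hq0 hFa0]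
        apply ENNReal.ofReal_le_ofReal
        rw [hq_def]
        linarith only []
      rw [hcdfa] at hle
      exact (ENNReal.add_le_add_iff_right ENNReal.ofReal_ne_top).1 hle
    calc (μ ((fun ω => p ω i) ⁻¹' Set.Ioo a b)).toReal
        ≤ (ENNReal.ofReal q).toReal := ENNReal.toReal_mono ENNReal.ofReal_ne_top hA_le
    _ = q := ENNReal.toReal_ofReal hq0
  -- pointwise identity for exp (t * X)
  have hexpX : ∀ (u : ℝ) (i : Fin m) (ω : Ω),
      Real.exp (u * X i ω) = 1 + (Real.exp u - 1) * X i ω := by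
    intro u i ω
    by_cases h : a < p ω i ∧ p ω i < b
    · simp only [hX_def, if_pos h, mul_one]
      ring
    · simp [hX_def, if_neg h]
  have hexp_int : ∀ (u : ℝ) (i : Fin m), Integrable (fun ω => Real.exp (u * X i ω)) μ := by
    intro u i
    have he : (fun ω => Real.exp (u * X i ω)) = fun ω => 1 + (Real.exp u - 1) * X i ω :=
      funext fun ω => hexpX u i ω
    rw [he]
    exact (integrable_const 1).add ((hX_int i).const_mul _)
  -- mgf bound for each indicator
  have hmgf_le : ∀ i, mgf (X i) μ t ≤ Real.exp (q * (Real.exp t - 1)) := by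
    intro i
    have hmgf_eq : mgf (X i) μ t = 1 + (Real.exp t - 1) * ∫ ω, X i ω ∂μ := by
      rw [mgf]
      have he : (fun ω => Real.exp (t * X i ω)) = fun ω => 1 + (Real.exp t - 1) * X i ω :=
        funext fun ω => hexpX t i ω
      rw [he, integral_add (integrable_const 1) ((hX_int i).const_mul _),
        integral_const, MeasureTheory.integral_const_mul]
      simp [measure_univ]
    rw [hmgf_eq]
    have het1 : 1 ≤ Real.exp t := Real.one_le_exp ht0
    have h1 : (Real.exp t - 1) * (∫ ω, X i ω ∂μ) ≤ (Real.exp t - 1) * q :=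
      mul_le_mul_of_nonneg_left (hX_mean i) (by linarith only [het1])
    have h2 : q * (Real.exp t - 1) + 1 ≤ Real.exp (q * (Real.exp t - 1)) :=
      Real.add_one_le_exp _
    linarith only [h1, h2]
  -- the sum S and the count N
  set S : Ω → ℝ := ∑ i : Fin m, X i with hS_def
  clear_value S
  have hS_card : ∀ ω, S ω
      = ((Finset.univ.filter fun i => a < p ω i ∧ p ω i < b).card : ℝ) := by
    intro ω
    rw [hS_def, Finset.sum_apply]
    simp only [hX_def]
    rw [Finset.sum_boole]
  -- deterministic part: small count ⇒ estimator below threshold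
  have hdet : ∀ ω, S ω < s0 →
      imsEst m ε pl κ (p ω) < pibar + 4 * pibar * Δ + 2 * L * ε := by
    intro ω hSω
    set N : ℝ := ((Finset.univ.filter fun i => a < p ω i ∧ p ω i < b).card : ℝ) with hN_def
    have hN_lt : N < s0 := by rw [hN_def, ← hS_card ω]; exact hSω
    have h1Δ : (0:ℝ) < 1 + Δ := by linarith only [hΔpos]
    have hmepos : (0:ℝ) < (m:ℝ) * ε := mul_pos hm0 hε0
    have himsinf_le : imsInf m ε κ (p ω) ≤ max 1 N / ((m:ℝ) * ε) := by
      rw [imsInf]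
      apply csInf_le
      · refine ⟨0, ?_⟩
        rintro x ⟨a', b', _, _, hba', rfl⟩
        apply div_nonneg
        · exact le_trans zero_le_one (le_max_left _ _)
        · exact mul_nonneg hm0.le (by linarith only [hba', hε0])
      · exact ⟨a, b, hκa, hb1, by rw [hba_eq], by rw [hba_eq, hN_def]⟩
    have himsinf_nonneg : 0 ≤ imsInf m ε κ (p ω) := by
      rw [imsInf]
      apply Real.sInf_nonneg
      rintro x ⟨a', b', _, _, hba', rfl⟩
      apply div_nonneg
      · exact le_trans zero_le_one (le_max_left _ _)
      · exact mul_nonneg hm0.le (by linarith only [hba', hε0])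
    have hDfac_le : Dfac m ε pl ≤ 1 + Δ := by linarith only [hDΔ]
    have h1mε : 1 / ((m:ℝ) * ε) < pibar / (1 + Δ) := by
      rw [div_lt_div_iff₀ hmepos h1Δ]
      have h := (div_lt_iff₀ hm0).1 hmε
      nlinarith only [h]
    have hkey : (1 + Δ) * (pibar + L * ε + Real.sqrt 2 * Δ * pibar)
        < pibar + 4 * pibar * Δ + 2 * L * ε := by
      have hpd : 0 < pibar * Δ := mul_pos hpibar_pos hΔpos
      have hLε : 0 ≤ L * ε := mul_nonneg hL hε0.le
      have h1 : Real.sqrt 2 + Real.sqrt 2 * Δ < 3 := by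
        nlinarith only [hs2lt, hΔ1, hs2pos]
      have h2 : 0 < pibar * Δ * (3 - Real.sqrt 2 - Real.sqrt 2 * Δ) :=
        mul_pos hpd (by linarith only [h1])
      have h3 : 0 ≤ L * ε * (1 - Δ) := mul_nonneg hLε (by linarith only [hΔ1])
      nlinarith only [h2, h3]
    have hfrac : N / ((m:ℝ) * ε) < pibar + L * ε + Real.sqrt 2 * Δ * pibar := by
      rw [div_lt_iff₀ hmepos]
      have h2 : s0 ≤ (pibar + L * ε + Real.sqrt 2 * Δ * pibar) * ((m:ℝ) * ε) := by
        rw [hs0_def, hdl_def]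
        nlinarith only [hqub, hm0, hε0]
      linarith only [hN_lt, h2]
    have hTpibar : pibar ≤ pibar + 4 * pibar * Δ + 2 * L * ε := by
      have h1 : 0 ≤ 4 * pibar * Δ := by positivity
      have h2 : 0 ≤ 2 * L * ε := by positivity
      linarith only [h1, h2]
    have hx0lt : max 1 N / ((m:ℝ) * ε)
        < (pibar + 4 * pibar * Δ + 2 * L * ε) / (1 + Δ) := by
      rw [← max_div_div_right hmepos.le 1 N]
      apply max_lt
      · refine lt_of_lt_of_le h1mε ?_
        exact (div_le_div_iff_of_pos_right h1Δ).2 hTpibar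
      · refine lt_of_lt_of_le hfrac ?_
        rw [le_div_iff₀ h1Δ]
        nlinarith only [hkey]
    have hprod : Dfac m ε pl * imsInf m ε κ (p ω) < pibar + 4 * pibar * Δ + 2 * L * ε := by
      calc Dfac m ε pl * imsInf m ε κ (p ω) ≤ (1 + Δ) * imsInf m ε κ (p ω) :=
            mul_le_mul_of_nonneg_right hDfac_le himsinf_nonneg
      _ ≤ (1 + Δ) * (max 1 N / ((m:ℝ) * ε)) :=
            mul_le_mul_of_nonneg_left himsinf_le h1Δ.le
      _ < (1 + Δ) * ((pibar + 4 * pibar * Δ + 2 * L * ε) / (1 + Δ)) :=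
            mul_lt_mul_of_pos_left hx0lt h1Δ
      _ = pibar + 4 * pibar * Δ + 2 * L * ε := mul_div_cancel₀ _ h1Δ.ne'
    rw [imsEst]
    apply max_lt _ hprod
    linarith only [hplpibar, hTpibar]
  -- event inclusion
  have hsubE : {ω | pibar + 4 * pibar * Δ + 2 * L * ε ≤ imsEst m ε pl κ (p ω)}
      ⊆ {ω | s0 ≤ S ω} := by
    intro ω hω
    by_contra hA
    simp only [Set.mem_setOf_eq] at hA
    push_neg at hA
    exact absurd hω (not_le.2 (hdet ω hA))
  refine le_trans (measure_mono hsubE) ?_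
  by_cases hcase : q + dl ≤ 1
  · -- Chernoff bound
    have hdl1 : dl ≤ 1 := by linarith only [hcase, hq0]
    have ht1 : t ≤ 1 := by rw [ht_def]; linarith only [hdl1, hdlpos]
    have h_int_sum : Integrable (fun ω => Real.exp (t * S ω)) μ := by
      rw [hS_def]
      exact hX_indep.integrable_exp_mul_sum hX_meas (fun i _ => hexp_int t i)
    have hchern := measure_ge_le_exp_mul_mgf (μ := μ) (X := S) s0 ht0 h_int_sum
    have hmgfS : mgf S μ t = ∏ i, mgf (X i) μ t := by
      rw [hS_def]
      exact hX_indep.mgf_sum hX_meas Finset.univ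
    have hmgfS_le : mgf S μ t ≤ Real.exp ((m:ℝ) * (q * (Real.exp t - 1))) := by
      rw [hmgfS]
      calc ∏ i, mgf (X i) μ t ≤ ∏ _i : Fin m, Real.exp (q * (Real.exp t - 1)) :=
            Finset.prod_le_prod (fun i _ => mgf_nonneg) (fun i _ => hmgf_le i)
      _ = Real.exp ((m:ℝ) * (q * (Real.exp t - 1))) := by
          rw [Finset.prod_const, ← Real.exp_nat_mul]
          simp [Finset.card_univ]
    have hexp_t : Real.exp t ≤ 1 + t + t ^ 2 := by
      have h := Real.exp_bound' ht0 ht1 (n := 2) (by norm_num)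
      norm_num [Finset.sum_range_succ, Nat.factorial] at h
      nlinarith only [h, sq_nonneg t]
    have hexpo : -t * s0 + (m:ℝ) * (q * (Real.exp t - 1))
        ≤ -(m:ℝ) * ε ^ 2 * Δ ^ 2 * pibar ^ 2 / 2 := by
      have he1 : q * (Real.exp t - 1) ≤ q * (t + t ^ 2) :=
        mul_le_mul_of_nonneg_left (by linarith only [hexp_t]) hq0
      have he2 : q * (t + t ^ 2) ≤ q * t + t ^ 2 := by
        have h := mul_nonneg (sub_nonneg.2 hq1) (sq_nonneg t)
        nlinarith only [h]
      have he3 : (m:ℝ) * (q * (Real.exp t - 1)) ≤ (m:ℝ) * (q * t + t ^ 2) :=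
        mul_le_mul_of_nonneg_left (by linarith only [he1, he2]) hm0.le
      have he4 : -t * s0 = -(m:ℝ) * q * t - (m:ℝ) * dl * t := by
        rw [hs0_def]; ring
      have he5 : -(m:ℝ) * dl * t + (m:ℝ) * t ^ 2 = -(m:ℝ) * dl ^ 2 / 4 := by
        rw [ht_def]; ring
      have hdlsq : dl ^ 2 = 2 * (ε * Δ * pibar) ^ 2 := by
        rw [hdl_def, mul_pow, hs2]
      have he6 : -(m:ℝ) * dl ^ 2 / 4 = -(m:ℝ) * ε ^ 2 * Δ ^ 2 * pibar ^ 2 / 2 := by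
        rw [hdlsq]; ring
      linarith only [he3, he4, he5, he6]
    have hfinal : Real.exp (-t * s0) * mgf S μ t
        ≤ Real.exp (-(m:ℝ) * ε ^ 2 * Δ ^ 2 * pibar ^ 2 / 2) := by
      calc Real.exp (-t * s0) * mgf S μ t
          ≤ Real.exp (-t * s0) * Real.exp ((m:ℝ) * (q * (Real.exp t - 1))) :=
            mul_le_mul_of_nonneg_left hmgfS_le (Real.exp_pos _).le
      _ = Real.exp (-t * s0 + (m:ℝ) * (q * (Real.exp t - 1))) := (Real.exp_add _ _).symm
      _ ≤ _ := Real.exp_le_exp.2 hexpo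
    have hAle : μ {ω | s0 ≤ S ω}
        ≤ ENNReal.ofReal (Real.exp (-(m:ℝ) * ε ^ 2 * Δ ^ 2 * pibar ^ 2 / 2)) := by
      rw [← ENNReal.ofReal_toReal (measure_ne_top μ {ω | s0 ≤ S ω})]
      exact ENNReal.ofReal_le_ofReal (le_trans hchern hfinal)
    refine le_trans hAle (ENNReal.ofReal_le_ofReal ?_)
    linarith only [(Real.exp_pos (-(m:ℝ) * ε ^ 2 * Δ ^ 2 * pibar ^ 2 / 2)).le]
  · -- the event is empty
    push_neg at hcase
    have hempty : {ω | s0 ≤ S ω} = ∅ := by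
      ext ω
      simp only [Set.mem_setOf_eq, Set.mem_empty_iff_false, iff_false, not_le]
      have hcard : S ω ≤ (m : ℝ) := by
        rw [hS_card ω]
        have h := Finset.card_filter_le Finset.univ (fun i : Fin m => a < p ω i ∧ p ω i < b)
        calc ((Finset.univ.filter fun i => a < p ω i ∧ p ω i < b).card : ℝ)
            ≤ (Finset.univ.card : ℝ) := by exact_mod_cast h
        _ = (m : ℝ) := by simp
      have h2 : (m : ℝ) < s0 := by
        rw [hs0_def]
        have h3 : (0:ℝ) < (m:ℝ) * (q + dl - 1) := mul_pos hm0 (by linarith only [hcase])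
        nlinarith only [h3]
      linarith only [hcard, h2]
    rw [hempty]
    simp

end
end

section
/- Let (τ_k)_{k=0,…,m} be a nondecreasing sequence of nonnegative reals, let p = (p_1,…,p_m) ∈ [0,1]^m, and set k̂(p) = max{k ∈ {0,…,m} : p_(k) ≤ τ_k}, where 0 =: p_(0) ≤ p_(1) ≤ … ≤ p_(m) are the ordered values of p. Fix i ∈ {1,…,m} and let p' ∈ [0,1]^m be any vector such that for every j, p'_j ≤ p_j if p_j ≤ p_i, and p'_j = p_j if p_j > p_i. Then p_i ≤ τ_{k̂(p)} if and only if p_i ≤ τ_{k̂(p')}, and either of these assertions implies k̂(p) = k̂(p'). -/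
noncomputable section

open Classical in
/-- `orderStat p k` is the `k`-th smallest value of `p` (1-indexed), with
`orderStat p 0 = 0`. -/
def orderStat {m : ℕ} (p : Fin m → ℝ) (k : ℕ) : ℝ :=
  if k = 0 then 0
  else sInf {t : ℝ | k ≤ (Finset.univ.filter fun i => p i ≤ t).card}

open Classical in
/-- Rejection number `k̂(p) = max{k ∈ {0,…,m} : p_(k) ≤ τ_k}` of the step-up procedure
with thresholds `τ`. -/
def stepUpK (m : ℕ) (τ : ℕ → ℝ) (p : Fin m → ℝ) : ℕ :=
  Nat.findGreatest (fun k => orderStat p k ≤ τ k) m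

open Classical in
lemma orderStat_le_iff {m : ℕ} (p : Fin m → ℝ) (hp : ∀ j, p j ∈ Set.Icc (0 : ℝ) 1)
    (k : ℕ) (hk1 : k ≠ 0) (hkm : k ≤ m) (t : ℝ) :
    orderStat p k ≤ t ↔ k ≤ (Finset.univ.filter fun j => p j ≤ t).card := by
  set S : Set ℝ := {t : ℝ | k ≤ (Finset.univ.filter fun i => p i ≤ t).card} with hSdef
  have hOS : orderStat p k = sInf S := by rw [orderStat, if_neg hk1]
  have hmem : ∀ s : ℝ, s ∈ S ↔ k ≤ (Finset.univ.filter fun j => p j ≤ s).card :=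
    fun s => Iff.rfl
  have hne : S.Nonempty := by
    refine ⟨1, ?_⟩
    have huniv : (Finset.univ.filter fun j => p j ≤ (1:ℝ)) = Finset.univ :=
      Finset.filter_true_of_mem (fun j _ => (hp j).2)
    rw [hmem, huniv, Finset.card_univ, Fintype.card_fin]
    exact hkm
  have hbdd : BddBelow S := by
    refine ⟨0, fun s hs => ?_⟩
    have hk : k ≤ (Finset.univ.filter fun j => p j ≤ s).card := hs
    have hpos : (Finset.univ.filter fun j => p j ≤ s).Nonempty := by
      rw [← Finset.card_pos]; omega
    obtain ⟨j, hj⟩ := hpos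
    simp only [Finset.mem_filter, Finset.mem_univ, true_and] at hj
    exact le_trans (hp j).1 hj
  have hclosed : IsClosed S := by
    rw [← isOpen_compl_iff, isOpen_iff_mem_nhds]
    intro s hs
    simp only [Set.mem_compl_iff, hmem, not_le] at hs
    by_cases hne2 : (Finset.univ.filter fun j => s < p j).Nonempty
    · set δ := Finset.inf' _ hne2 (fun j => p j - s) with hδ
      have hδpos : 0 < δ := by
        rw [hδ, Finset.lt_inf'_iff]
        intro j hj
        simp only [Finset.mem_filter, Finset.mem_univ, true_and] at hj
        linarith
      have hIoo : Set.Ioo (s - 1) (s + δ) ∈ nhds s :=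
        Ioo_mem_nhds (by linarith) (by linarith)
      refine Filter.mem_of_superset hIoo ?_
      intro u hu
      simp only [Set.mem_Ioo] at hu
      simp only [Set.mem_compl_iff, hmem, not_le]
      have hsub : (Finset.univ.filter fun j => p j ≤ u) ⊆
          (Finset.univ.filter fun j => p j ≤ s) := by
        intro j hj
        simp only [Finset.mem_filter, Finset.mem_univ, true_and] at hj ⊢
        by_contra hns
        push_neg at hns
        have hjmem : j ∈ Finset.univ.filter fun j => s < p j := by
          simp only [Finset.mem_filter, Finset.mem_univ, true_and]
          exact hns
        have hle := Finset.inf'_le (fun j => p j - s) hjmem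
        rw [← hδ] at hle
        linarith [hu.2]
      calc (Finset.univ.filter fun j => p j ≤ u).card
          ≤ (Finset.univ.filter fun j => p j ≤ s).card := Finset.card_le_card hsub
        _ < k := hs
    · exfalso
      rw [Finset.not_nonempty_iff_eq_empty, Finset.filter_eq_empty_iff] at hne2
      have huniv : (Finset.univ.filter fun j => p j ≤ s) = Finset.univ := by
        refine Finset.filter_true_of_mem (fun j _ => ?_)
        have := hne2 (Finset.mem_univ j)
        push_neg at this
        exact this
      rw [huniv, Finset.card_univ, Fintype.card_fin] at hs
      omega
  have hsInf : sInf S ∈ S := hclosed.csInf_mem hne hbdd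
  rw [hOS]
  constructor
  · intro hle
    have hsub : (Finset.univ.filter fun j => p j ≤ sInf S) ⊆
        (Finset.univ.filter fun j => p j ≤ t) := by
      intro j hj
      simp only [Finset.mem_filter, Finset.mem_univ, true_and] at hj ⊢
      linarith
    exact le_trans hsInf (Finset.card_le_card hsub)
  · intro ht
    exact csInf_le hbdd ht

/-- Lemma A.1, variation of Lemma D.6 in Marandon et al.: for a
nondecreasing nonnegative threshold sequence `τ` and a modification `p'` of `p` that only
decreases the coordinates `≤ p_i` and fixes the others, `p_i ≤ τ_{k̂(p)} ↔ p_i ≤ τ_{k̂(p')}`,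
and both assertions imply `k̂(p) = k̂(p')`. -/
theorem statement17 (m : ℕ) (τ : ℕ → ℝ)
    (hτ_nonneg : ∀ k, k ≤ m → 0 ≤ τ k)
    (hτ_mono : ∀ j k, j ≤ k → k ≤ m → τ j ≤ τ k)
    (p p' : Fin m → ℝ)
    (hp : ∀ j, p j ∈ Set.Icc (0 : ℝ) 1) (hp' : ∀ j, p' j ∈ Set.Icc (0 : ℝ) 1)
    (i : Fin m)
    (h : ∀ j, (p j ≤ p i ∧ p' j ≤ p j) ∨ (p i < p j ∧ p' j = p j)) :
    (p i ≤ τ (stepUpK m τ p) ↔ p i ≤ τ (stepUpK m τ p')) ∧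
      (p i ≤ τ (stepUpK m τ p) → stepUpK m τ p = stepUpK m τ p') := by
  classical
  have hp'le : ∀ j, p' j ≤ p j := by
    intro j
    rcases h j with ⟨_, h2⟩ | ⟨_, h2⟩
    · exact h2
    · exact h2.le
  set K := stepUpK m τ p with hK
  set K' := stepUpK m τ p' with hK'
  have hKm : K ≤ m := by rw [hK, stepUpK]; exact Nat.findGreatest_le m
  have hK'm : K' ≤ m := by rw [hK', stepUpK]; exact Nat.findGreatest_le m
  have hbase : ∀ q : Fin m → ℝ, orderStat q 0 ≤ τ 0 := by
    intro q
    rw [orderStat, if_pos rfl]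
    exact hτ_nonneg 0 (Nat.zero_le m)
  have hspec : orderStat p K ≤ τ K := by
    rw [hK, stepUpK]
    exact Nat.findGreatest_spec (P := fun k => orderStat p k ≤ τ k) (Nat.zero_le m) (hbase p)
  have hspec' : orderStat p' K' ≤ τ K' := by
    rw [hK', stepUpK]
    exact Nat.findGreatest_spec (P := fun k => orderStat p' k ≤ τ k) (Nat.zero_le m) (hbase p')
  have hcount : ∀ t : ℝ, p i ≤ t →
      (Finset.univ.filter fun j => p j ≤ t) = (Finset.univ.filter fun j => p' j ≤ t) := by
    intro t ht
    ext j
    simp only [Finset.mem_filter, Finset.mem_univ, true_and]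
    constructor
    · intro hj; exact le_trans (hp'le j) hj
    · intro hj
      rcases h j with ⟨h1, _⟩ | ⟨_, h2⟩
      · linarith
      · rw [← h2]; exact hj
  have hsub : ∀ t : ℝ, (Finset.univ.filter fun j => p j ≤ t) ⊆
      (Finset.univ.filter fun j => p' j ≤ t) := by
    intro t j hj
    simp only [Finset.mem_filter, Finset.mem_univ, true_and] at hj ⊢
    exact le_trans (hp'le j) hj
  have hKK' : K ≤ K' := by
    rw [hK', stepUpK]
    apply Nat.le_findGreatest hKm
    by_cases hK0 : K = 0
    · rw [hK0]; exact hbase p'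
    · rw [orderStat_le_iff p' hp' K hK0 hKm]
      exact le_trans ((orderStat_le_iff p hp K hK0 hKm (τ K)).1 hspec)
        (Finset.card_le_card (hsub (τ K)))
  have hback : p i ≤ τ K' → K' ≤ K := by
    intro hpi'
    by_cases hK'0 : K' = 0
    · rw [hK'0]; exact Nat.zero_le K
    · rw [hK, stepUpK]
      apply Nat.le_findGreatest hK'm
      rw [orderStat_le_iff p hp K' hK'0 hK'm, hcount (τ K') hpi']
      exact (orderStat_le_iff p' hp' K' hK'0 hK'm (τ K')).1 hspec'
  have hfwd : p i ≤ τ K → K = K' := by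
    intro hpi
    have hpi' : p i ≤ τ K' := le_trans hpi (hτ_mono K K' hKK' hK'm)
    exact le_antisymm hKK' (hback hpi')
  refine ⟨⟨fun hpi => ?_, fun hpi' => ?_⟩, hfwd⟩
  · rw [← hfwd hpi]; exact hpi
  · have heq : K = K' := le_antisymm hKK' (hback hpi')
    rw [heq]; exact hpi'

end
end
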